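/- If the first player's opening move in standard subset take-away on a set A of size n ≥ 3 is an edge (a 2-element subset), then the second player can win: the resulting position is a first-player win for the player to move (i.e., the opener's edge move is a losing move). -/
import Mathlib


variable {α : Type*} [DecidableEq α]

/-- Playing move `a` in position `K` removes every simplex containing `a`. -/
def gameMove (K : Finset (Finset α)) (a : Finset α) : Finset (Finset α) :=
  K.filter fun b => ¬ a ⊆ b

/-- The player to move wins position `K` (normal play). -/
def FirstWins (K : Finset (Finset α)) : Prop :=
  ∃ a : {a // a ∈ K}, ¬ FirstWins (gameMove K a.1)
termination_by K.card
decreasing_by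
  refine Finset.card_lt_card ?_
  refine (Finset.ssubset_iff_of_subset (Finset.filter_subset _ _)).mpr ?_
  exact ⟨a.1, a.2, by simp⟩

/-- Standard starting position: all proper non-empty subsets of `A`. -/
def startPos (A : Finset α) : Finset (Finset α) :=
  A.powerset.filter fun s => s ≠ ∅ ∧ s ≠ A

/-- The filled simplex: all non-empty subsets of `A`, including `A`. -/
def fullSimplex (A : Finset α) : Finset (Finset α) :=
  A.powerset.filter fun s => s ≠ ∅

/-- `K` is an abstract simplicial complex of non-empty sets. -/
def IsComplex (K : Finset (Finset α)) : Prop :=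
  ∀ a ∈ K, a ≠ ∅ ∧ ∀ b ⊆ a, b ≠ ∅ → b ∈ K

lemma firstWins_iff (K : Finset (Finset α)) :
    FirstWins K ↔ ∃ a ∈ K, ¬ FirstWins (gameMove K a) := by
  rw [FirstWins]
  constructor
  · rintro ⟨⟨a, ha⟩, h⟩; exact ⟨a, ha, h⟩
  · rintro ⟨a, ha, h⟩; exact ⟨⟨a, ha⟩, h⟩

lemma gameMove_card_lt (K : Finset (Finset α)) (a : Finset α) (ha : a ∈ K) :
    (gameMove K a).card < K.card := by
  refine Finset.card_lt_card ?_
  refine (Finset.ssubset_iff_of_subset (Finset.filter_subset _ _)).mpr ?_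
  exact ⟨a, ha, by simp [gameMove]⟩

/-- swap of `x` and `y` -/
def swp (x y : α) : α → α := fun a => if a = x then y else if a = y then x else a

lemma swp_swp (x y a : α) : swp x y (swp x y a) = a := by
  unfold swp; split_ifs <;> simp_all

lemma mem_swpImg {x y : α} {s : Finset α} {a : α} :
    a ∈ s.image (swp x y) ↔ swp x y a ∈ s := by
  constructor
  · intro h
    obtain ⟨b, hb, rfl⟩ := Finset.mem_image.mp h
    rwa [swp_swp]
  · intro h; exact Finset.mem_image.mpr ⟨_, h, swp_swp x y a⟩

lemma swpImg_swpImg (x y : α) (s : Finset α) :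
    (s.image (swp x y)).image (swp x y) = s := by
  ext a; rw [mem_swpImg, mem_swpImg, swp_swp]

lemma swpImg_subset {x y : α} {s t : Finset α} (h : s ⊆ t) :
    s.image (swp x y) ⊆ t.image (swp x y) := Finset.image_subset_image h

lemma swpImg_of_notMem {x y : α} {s : Finset α} (hx : x ∉ s) (hy : y ∉ s) :
    s.image (swp x y) = s := by
  ext a
  rw [mem_swpImg]
  unfold swp
  split_ifs with h1 h2
  · subst h1; simp [hx, hy]
  · subst h2; simp [hx, hy]
  · rfl

lemma mem_x_swpImg {x y : α} {s : Finset α} : x ∈ s.image (swp x y) ↔ y ∈ s := by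
  rw [mem_swpImg]; unfold swp; simp

lemma mem_y_swpImg {x y : α} (hxy : x ≠ y) {s : Finset α} :
    y ∈ s.image (swp x y) ↔ x ∈ s := by
  rw [mem_swpImg]; unfold swp; simp [hxy.symm]

/-- Binary-star reduction: if no member of `L` contains both `x` and `y`, and `L` is
invariant under swapping `x` and `y`, then `L` has the same outcome as the sub-position
of members avoiding both `x` and `y`. -/
lemma star_reduction (x y : α) (hxy : x ≠ y) (n : ℕ) :
    ∀ L : Finset (Finset α), L.card = n →
      (∀ s ∈ L, s.image (swp x y) ∈ L) →
      (∀ s ∈ L, ¬(x ∈ s ∧ y ∈ s)) →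
      (FirstWins L ↔ FirstWins (L.filter fun s => x ∉ s ∧ y ∉ s)) := by
  induction n using Nat.strong_induction_on with
  | _ n IH =>
  intro L hcard hsym hnb
  set D := L.filter (fun s => x ∉ s ∧ y ∉ s) with hD
  -- common fact: a move avoiding x, y preserves the hypotheses
  have move_avoid : ∀ s ∈ L, x ∉ s → y ∉ s →
      (FirstWins (gameMove L s) ↔ FirstWins (gameMove D s)) := by
    intro s hsL hxs hys
    have hsfix : s.image (swp x y) = s := swpImg_of_notMem hxs hys
    have hsym' : ∀ t ∈ gameMove L s, t.image (swp x y) ∈ gameMove L s := by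
      intro t ht
      rw [gameMove, Finset.mem_filter] at ht ⊢
      refine ⟨hsym t ht.1, ?_⟩
      intro hsub
      apply ht.2
      have := swpImg_subset (x := x) (y := y) hsub
      rwa [hsfix, swpImg_swpImg] at this
    have hnb' : ∀ t ∈ gameMove L s, ¬(x ∈ t ∧ y ∈ t) := fun t ht =>
      hnb t (Finset.mem_filter.mp ht).1
    have hfc : (gameMove L s).filter (fun t => x ∉ t ∧ y ∉ t) = gameMove D s := by
      rw [gameMove, gameMove, hD, Finset.filter_comm]
    have := IH (gameMove L s).card (hcard ▸ gameMove_card_lt L s hsL)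
      (gameMove L s) rfl hsym' hnb'
    rwa [hfc] at this
  by_cases hDw : FirstWins D
  · refine iff_of_true ?_ hDw
    rw [firstWins_iff] at hDw
    obtain ⟨s, hsD, hs⟩ := hDw
    rw [hD, Finset.mem_filter] at hsD
    rw [firstWins_iff]
    refine ⟨s, hsD.1, ?_⟩
    rw [move_avoid s hsD.1 hsD.2.1 hsD.2.2]
    exact hs
  · refine iff_of_false ?_ hDw
    intro hLw
    rw [firstWins_iff] at hLw
    obtain ⟨s, hsL, hs⟩ := hLw
    have hDall : ∀ a ∈ D, FirstWins (gameMove D a) := by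
      intro a ha
      by_contra hc
      exact hDw ((firstWins_iff D).mpr ⟨a, ha, hc⟩)
    by_cases hxs : x ∈ s
    case pos =>
      -- symmetric response case, x ∈ s, y ∉ s
      have hys : y ∉ s := fun hys => hnb s hsL ⟨hxs, hys⟩
      -- σs is a legal reply in gameMove L s
      have hσL : s.image (swp x y) ∈ L := hsym s hsL
      have hyσ : y ∈ s.image (swp x y) := (mem_y_swpImg hxy).mpr hxs
      have hxσ : x ∉ s.image (swp x y) := fun h => hys (mem_x_swpImg.mp h)
      have hnsub : ¬ s ⊆ s.image (swp x y) := fun h => hxσ (h hxs)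
      have hσmem : s.image (swp x y) ∈ gameMove L s :=
        Finset.mem_filter.mpr ⟨hσL, hnsub⟩
      -- since gameMove L s is a loss, the reply σs leads to a win: L2 wins
      have hL2w : FirstWins (gameMove (gameMove L s) (s.image (swp x y))) := by
        by_contra hc
        exact hs ((firstWins_iff _).mpr ⟨_, hσmem, hc⟩)
      set L2 := gameMove (gameMove L s) (s.image (swp x y)) with hL2
      -- but L2 satisfies the hypotheses and its reduction is D, which is a loss
      have hmemL2 : ∀ t, t ∈ L2 ↔ t ∈ L ∧ ¬ s ⊆ t ∧ ¬ s.image (swp x y) ⊆ t := by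
        intro t
        simp only [hL2, gameMove, Finset.mem_filter]
        tauto
      have hL2sub : L2 ⊆ L := fun t ht => ((hmemL2 t).mp ht).1
      have hsnot : s ∉ L2 := fun h => ((hmemL2 s).mp h).2.1 (subset_refl s)
      have hcard2 : L2.card < n := by
        rw [← hcard]
        exact Finset.card_lt_card
          ((Finset.ssubset_iff_of_subset hL2sub).mpr ⟨s, hsL, hsnot⟩)
      have hsym2 : ∀ t ∈ L2, t.image (swp x y) ∈ L2 := by
        intro t ht
        rw [hmemL2] at ht ⊢
        refine ⟨hsym t ht.1, ?_, ?_⟩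
        · intro hsub
          apply ht.2.2
          have := swpImg_subset (x := x) (y := y) hsub
          rwa [swpImg_swpImg] at this
        · intro hsub
          apply ht.2.1
          have := swpImg_subset (x := x) (y := y) hsub
          rwa [swpImg_swpImg, swpImg_swpImg] at this
      have hnb2 : ∀ t ∈ L2, ¬(x ∈ t ∧ y ∈ t) := fun t ht => hnb t (hL2sub ht)
      have hDL2 : L2.filter (fun t => x ∉ t ∧ y ∉ t) = D := by
        ext t
        rw [hD, Finset.mem_filter, Finset.mem_filter, hmemL2]
        constructor
        · tauto
        · rintro ⟨htL, hxt, hyt⟩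
          exact ⟨⟨htL, fun h => hxt (h hxs), fun h => hyt (h hyσ)⟩, hxt, hyt⟩
      have := IH L2.card hcard2 L2 rfl hsym2 hnb2
      rw [hDL2] at this
      exact hDw (this.mp hL2w)
    case neg =>
      by_cases hys : y ∈ s
      case pos =>
        -- symmetric: y ∈ s, x ∉ s
        have hσL : s.image (swp x y) ∈ L := hsym s hsL
        have hxσ : x ∈ s.image (swp x y) := mem_x_swpImg.mpr hys
        have hyσ : y ∉ s.image (swp x y) := fun h => hxs ((mem_y_swpImg hxy).mp h)
        have hnsub : ¬ s ⊆ s.image (swp x y) := fun h => hyσ (h hys)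
        have hσmem : s.image (swp x y) ∈ gameMove L s :=
          Finset.mem_filter.mpr ⟨hσL, hnsub⟩
        have hL2w : FirstWins (gameMove (gameMove L s) (s.image (swp x y))) := by
          by_contra hc
          exact hs ((firstWins_iff _).mpr ⟨_, hσmem, hc⟩)
        set L2 := gameMove (gameMove L s) (s.image (swp x y)) with hL2
        have hmemL2 : ∀ t, t ∈ L2 ↔ t ∈ L ∧ ¬ s ⊆ t ∧ ¬ s.image (swp x y) ⊆ t := by
          intro t
          simp only [hL2, gameMove, Finset.mem_filter]
          tauto
        have hL2sub : L2 ⊆ L := fun t ht => ((hmemL2 t).mp ht).1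
        have hsnot : s ∉ L2 := fun h => ((hmemL2 s).mp h).2.1 (subset_refl s)
        have hcard2 : L2.card < n := by
          rw [← hcard]
          exact Finset.card_lt_card
            ((Finset.ssubset_iff_of_subset hL2sub).mpr ⟨s, hsL, hsnot⟩)
        have hsym2 : ∀ t ∈ L2, t.image (swp x y) ∈ L2 := by
          intro t ht
          rw [hmemL2] at ht ⊢
          refine ⟨hsym t ht.1, ?_, ?_⟩
          · intro hsub
            apply ht.2.2
            have := swpImg_subset (x := x) (y := y) hsub
            rwa [swpImg_swpImg] at this
          · intro hsub
            apply ht.2.1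
            have := swpImg_subset (x := x) (y := y) hsub
            rwa [swpImg_swpImg, swpImg_swpImg] at this
        have hnb2 : ∀ t ∈ L2, ¬(x ∈ t ∧ y ∈ t) := fun t ht => hnb t (hL2sub ht)
        have hDL2 : L2.filter (fun t => x ∉ t ∧ y ∉ t) = D := by
          ext t
          rw [hD, Finset.mem_filter, Finset.mem_filter, hmemL2]
          constructor
          · tauto
          · rintro ⟨htL, hxt, hyt⟩
            exact ⟨⟨htL, fun h => hyt (h hys), fun h => hxt (h hxσ)⟩, hxt, hyt⟩
        have := IH L2.card hcard2 L2 rfl hsym2 hnb2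
        rw [hDL2] at this
        exact hDw (this.mp hL2w)
      case neg =>
        -- s avoids both, contradiction with D being a loss
        have hsD : s ∈ D := Finset.mem_filter.mpr ⟨hsL, hxs, hys⟩
        have := (move_avoid s hsL hxs hys).mpr (hDall s hsD)
        exact hs this

/-- Strategy stealing: the full simplex on a nonempty set is a first-player win. -/
lemma fullSimplex_firstWins (B : Finset α) (hB : B.Nonempty) :
    FirstWins (fullSimplex B) := by
  have hBmem : B ∈ fullSimplex B := by
    rw [fullSimplex, Finset.mem_filter, Finset.mem_powerset]
    exact ⟨subset_refl B, hB.ne_empty⟩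
  by_cases h : FirstWins (startPos B)
  · rw [firstWins_iff] at h
    obtain ⟨a, haS, ha⟩ := h
    rw [startPos, Finset.mem_filter, Finset.mem_powerset] at haS
    obtain ⟨haB, hane, hanB⟩ := haS
    have haF : a ∈ fullSimplex B := by
      rw [fullSimplex, Finset.mem_filter, Finset.mem_powerset]
      exact ⟨haB, hane⟩
    rw [firstWins_iff]
    refine ⟨a, haF, ?_⟩
    have heq : gameMove (fullSimplex B) a = gameMove (startPos B) a := by
      ext t
      simp only [gameMove, fullSimplex, startPos, Finset.mem_filter,
        Finset.mem_powerset]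
      constructor
      · rintro ⟨⟨htB, htne⟩, hat⟩
        refine ⟨⟨htB, htne, ?_⟩, hat⟩
        rintro rfl
        exact hat haB
      · tauto
    rw [heq]
    exact ha
  · rw [firstWins_iff]
    refine ⟨B, hBmem, ?_⟩
    have heq : gameMove (fullSimplex B) B = startPos B := by
      ext t
      simp only [gameMove, fullSimplex, startPos, Finset.mem_filter,
        Finset.mem_powerset]
      constructor
      · rintro ⟨⟨htB, htne⟩, hBt⟩
        exact ⟨htB, htne, fun h => hBt (h ▸ subset_refl B)⟩
      · rintro ⟨htB, htne, htnB⟩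
        exact ⟨⟨htB, htne⟩, fun h => htnB (Finset.Subset.antisymm htB h)⟩
    rw [heq]
    exact h

theorem stmt9 (A : Finset α) (h : 3 ≤ A.card) (x y : α) (hx : x ∈ A) (hy : y ∈ A)
    (hxy : x ≠ y) : FirstWins (gameMove (startPos A) {x, y}) := by
  set K := gameMove (startPos A) {x, y} with hK
  have hmemK : ∀ t, t ∈ K ↔ t ⊆ A ∧ t ≠ ∅ ∧ t ≠ A ∧ ¬(x ∈ t ∧ y ∈ t) := by
    intro t
    rw [hK, gameMove, Finset.mem_filter, startPos, Finset.mem_filter,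
      Finset.mem_powerset, Finset.insert_subset_iff, Finset.singleton_subset_iff]
    tauto
  have hswpA : ∀ a ∈ A, swp x y a ∈ A := by
    intro a ha
    unfold swp
    split_ifs <;> assumption
  have hsym : ∀ s ∈ K, s.image (swp x y) ∈ K := by
    intro s hs
    rw [hmemK] at hs ⊢
    obtain ⟨hsA, hsne, hsnA, hsb⟩ := hs
    refine ⟨?_, ?_, ?_, ?_⟩
    · intro a ha
      obtain ⟨b, hb, rfl⟩ := Finset.mem_image.mp ha
      exact hswpA b (hsA hb)
    · intro hc
      apply hsne
      rwa [Finset.image_eq_empty] at hc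
    · intro hc
      apply hsnA
      have : ((s.image (swp x y)).image (swp x y)) = A.image (swp x y) := by rw [hc]
      rw [swpImg_swpImg] at this
      have hAA : A.image (swp x y) = A := by
        apply Finset.eq_of_subset_of_card_le
        · intro a ha
          obtain ⟨b, hb, rfl⟩ := Finset.mem_image.mp ha
          exact hswpA b hb
        · rw [Finset.card_image_of_injective]
          intro a b hab
          have := congrArg (swp x y) hab
          rwa [swp_swp, swp_swp] at this
      rw [hAA] at this
      exact this
    · rintro ⟨hxσ, hyσ⟩
      exact hsb ⟨(mem_y_swpImg hxy).mp hyσ, mem_x_swpImg.mp hxσ⟩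
  have hnb : ∀ s ∈ K, ¬(x ∈ s ∧ y ∈ s) := fun s hs => ((hmemK s).mp hs).2.2.2
  have hred := star_reduction x y hxy K.card K rfl hsym hnb
  have hDfull : K.filter (fun s => x ∉ s ∧ y ∉ s) = fullSimplex (A \ {x, y}) := by
    ext t
    rw [Finset.mem_filter, hmemK, fullSimplex, Finset.mem_filter, Finset.mem_powerset,
      Finset.subset_sdiff]
    constructor
    · rintro ⟨⟨htA, htne, _, _⟩, hxt, hyt⟩
      refine ⟨⟨htA, ?_⟩, htne⟩
      rw [Finset.disjoint_right]
      intro a ha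
      rw [Finset.mem_insert, Finset.mem_singleton] at ha
      rcases ha with rfl | rfl
      · exact hxt
      · exact hyt
    · rintro ⟨⟨htA, hdisj⟩, htne⟩
      rw [Finset.disjoint_right] at hdisj
      have hxt : x ∉ t := fun h => hdisj (Finset.mem_insert_self x {y}) h
      have hyt : y ∉ t := fun h =>
        hdisj (Finset.mem_insert_of_mem (Finset.mem_singleton_self y)) h
      refine ⟨⟨htA, htne, ?_, fun hc => hxt hc.1⟩, hxt, hyt⟩
      rintro rfl
      exact hxt hx
  rw [hred, hDfull]
  apply fullSimplex_firstWins
  rw [← Finset.card_pos, Finset.card_sdiff_of_subset]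
  · have h2 : ({x, y} : Finset α).card = 2 := by
      rw [Finset.card_insert_of_notMem (by simp [hxy]), Finset.card_singleton]
    omega
  · intro a ha
    rw [Finset.mem_insert, Finset.mem_singleton] at ha
    rcases ha with rfl | rfl <;> assumption
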